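/- arXiv:2507.08571 — 4 statements merged into one kernel-verified Lean document; each statement's English description precedes it below -/
import Mathlib

section
/- Let (M,F,𝔪) be a forward complete non-compact Finsler metric measure manifold with Ric_∞ ≥ 0. Then for every bounded Borel subset E ⊂ M, the forward Minkowski content satisfies 𝔪⁺(E) ≥ VE_F · 𝔪(E), where VE_F = lim_{r→∞} log 𝔪(B⁺_r(x))/r is the volume entropy. -/
open MeasureTheory Filter Set Topology ENNReal

/-- An abstract Finsler metric measure manifold: a (possibly asymmetric)
distance satisfying the triangle inequality, together with a measure. -/
structure FMMS (M : Type*) [MeasurableSpace M] where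
  d : M → M → ℝ
  d_nonneg : ∀ x y, 0 ≤ d x y
  d_self : ∀ x, d x x = 0
  d_triangle : ∀ x y z, d x z ≤ d x y + d y z
  vol : Measure M

namespace FMMS

variable {M : Type*} [MeasurableSpace M]

/-- Forward metric ball `B⁺_r(x)`. -/
def ball (S : FMMS M) (x : M) (r : ℝ) : Set M := {z | S.d x z < r}

/-- Forward `ε`-neighborhood `B⁺(E, ε)` of a set. -/
def nbhd (S : FMMS M) (E : Set M) (ε : ℝ) : Set M := {z | ∃ x ∈ E, S.d x z < ε}

/-- A set is (forward) bounded if it is contained in some forward ball. -/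
def Bounded (S : FMMS M) (E : Set M) : Prop := ∃ x r, 0 < r ∧ E ⊆ S.ball x r

/-- Forward Minkowski exterior boundary measure (Minkowski content) `𝔪⁺(E)`. -/
noncomputable def mink (S : FMMS M) (E : Set M) : ℝ≥0∞ :=
  Filter.liminf (fun ε : ℝ => (S.vol (S.nbhd E ε) - S.vol E) / ENNReal.ofReal ε)
    (nhdsWithin (0:ℝ) (Set.Ioi 0))

/-- Volume entropy `VE_F` with base point `x`. -/
noncomputable def VE (S : FMMS M) (x : M) : ℝ≥0∞ :=
  Filter.liminf (fun r : ℝ => ENNReal.ofReal (Real.log (S.vol (S.ball x r)).toReal / r))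
    Filter.atTop

/-- The set `Z_t(A,B)` of `t`-intermediate points of minimal geodesics from `A` to `B`. -/
def Zt (S : FMMS M) (t : ℝ) (A B : Set M) : Set M :=
  {z | ∃ x ∈ A, ∃ y ∈ B, S.d x z = t * S.d x y ∧ S.d z y = (1 - t) * S.d x y}

/-- The Brunn–Minkowski inequality for non-negative weighted Ricci curvature
`Ric_∞ ≥ 0` (equivalently, the `CD(0,∞)` condition):
`𝔪(Z_t(A,B)) ≥ 𝔪(A)^{1-t} 𝔪(B)^t`. -/
def BrunnMinkowski (S : FMMS M) : Prop :=
  ∀ A B : Set M, 0 < S.vol A → 0 < S.vol B → ∀ t : ℝ, t ∈ Set.Ioo (0:ℝ) 1 →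
    S.vol A ^ (1 - t) * S.vol B ^ t ≤ S.vol (S.Zt t A B)

/-- Forward completeness, encoded via the Hopf–Rinow property that closed
forward balls are compact. -/
def ForwardComplete [TopologicalSpace M] (S : FMMS M) : Prop :=
  ∀ x r, IsCompact (closure (S.ball x r))

/-- The second Cheeger constant `SCh_F = inf_E 𝔪⁺(E)/𝔪(E)` over bounded sets. -/
noncomputable def SCh (S : FMMS M) : ℝ≥0∞ :=
  ⨅ (E : Set M) (_ : S.Bounded E) (_ : MeasurableSet E) (_ : 0 < S.vol E),
    S.mink E / S.vol E

end FMMS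

/-- On a forward complete non-compact Finsler metric measure
manifold with `Ric_∞ ≥ 0`, every bounded Borel set `E` satisfies
`𝔪⁺(E) ≥ VE_F · 𝔪(E)`. -/
theorem isoperimetric_inequality
    {M : Type*} [MeasurableSpace M] [TopologicalSpace M]
    (S : FMMS M) (hfc : S.ForwardComplete) (hnc : ¬ CompactSpace M)
    (hbm : S.BrunnMinkowski)
    (E : Set M) (hEb : S.Bounded E) (hEm : MeasurableSet E) (x : M) :
    S.VE x * S.vol E ≤ S.mink E := by
  obtain ⟨x₀, r₀, hr₀, hEsub⟩ := hEb
  -- containment of E in balls around x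
  have hEball : ∀ r : ℝ, S.d x x₀ + r₀ ≤ r → E ⊆ S.ball x r := by
    intro r hr z hz
    have h1 : S.d x z ≤ S.d x x₀ + S.d x₀ z := S.d_triangle _ _ _
    have h2 : S.d x₀ z < r₀ := hEsub hz
    simp only [FMMS.ball, Set.mem_setOf_eq]
    linarith
  rcases eq_or_ne (S.vol E) 0 with h0 | h0
  · rw [h0, mul_zero]; exact zero_le
  rcases eq_or_ne (S.vol E) ⊤ with hT | hT
  · have hVE : S.VE x = 0 := by
      have hev : ∀ᶠ r : ℝ in atTop,
          ENNReal.ofReal (Real.log (S.vol (S.ball x r)).toReal / r) = (0 : ℝ≥0∞) := by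
        filter_upwards [eventually_ge_atTop (S.d x x₀ + r₀)] with r hr
        have hball : S.vol (S.ball x r) = ⊤ :=
          top_le_iff.mp (hT ▸ measure_mono (hEball r hr))
        simp [hball]
      rw [FMMS.VE, liminf_congr hev, liminf_const]
    rw [hVE, zero_mul]; exact zero_le
  have hE_nbhd : ∀ ε : ℝ, 0 < ε → E ⊆ S.nbhd E ε := by
    intro ε hε z hz
    exact ⟨z, hz, by rw [S.d_self]; exact hε⟩
  by_cases hfin : ∃ ε₀, 0 < ε₀ ∧ S.vol (S.nbhd E ε₀) ≠ ⊤
  swap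
  · push_neg at hfin
    have hm : S.mink E = ⊤ := by
      have hev : ∀ᶠ ε in nhdsWithin (0:ℝ) (Set.Ioi 0),
          (S.vol (S.nbhd E ε) - S.vol E) / ENNReal.ofReal ε = (⊤ : ℝ≥0∞) := by
        filter_upwards [self_mem_nhdsWithin] with ε (hε : (0:ℝ) < ε)
        rw [hfin ε hε, ENNReal.top_sub hT, ENNReal.top_div_of_ne_top ENNReal.ofReal_ne_top]
      rw [FMMS.mink, liminf_congr hev, liminf_const]
    rw [hm]; exact le_top
  obtain ⟨ε₀, hε₀, hNfin₀⟩ := hfin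
  have hNfin : ∀ ε ∈ Set.Ioc (0:ℝ) ε₀, S.vol (S.nbhd E ε) ≠ ⊤ := by
    intro ε hε h
    apply hNfin₀
    refine top_le_iff.mp ?_
    refine h ▸ measure_mono ?_
    intro z ⟨x', hx', hd⟩
    exact ⟨x', hx', lt_of_lt_of_le hd hε.2⟩
  -- the approximating sets
  set A : ℕ → Set M := fun n => E ∩ {z | S.d z x ≤ (n : ℝ)} with hA
  have hAmono : Monotone A := by
    intro a b hab z hz
    simp only [hA, Set.mem_inter_iff, Set.mem_setOf_eq] at hz ⊢
    exact ⟨hz.1, le_trans hz.2 (Nat.cast_le.mpr hab)⟩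
  have hAunion : (⋃ n, A n) = E := by
    ext z
    simp only [hA, Set.mem_iUnion, Set.mem_inter_iff, Set.mem_setOf_eq]
    constructor
    · rintro ⟨n, hz, _⟩; exact hz
    · intro hz
      obtain ⟨n, hn⟩ := exists_nat_ge (S.d z x)
      exact ⟨n, hz, hn⟩
  have hAtend : Tendsto (fun n => S.vol (A n)) atTop (𝓝 (S.vol E)) := by
    have := MeasureTheory.tendsto_measure_iUnion_atTop (μ := S.vol) hAmono
    rwa [hAunion] at this
  have hAne : ∀ n, S.vol (A n) ≠ ⊤ := fun n h =>
    hT (top_le_iff.mp (h ▸ measure_mono Set.inter_subset_left))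
  set VE' := (S.vol E).toReal with hVE'
  have hVE'pos : 0 < VE' := ENNReal.toReal_pos h0 hT
  -- Step 1 : VE x ≤ ofReal ((log N' - log m')/ε)
  have step1 : ∀ ε ∈ Set.Ioc (0:ℝ) ε₀, ∀ n : ℕ, S.vol (A n) ≠ 0 →
      S.VE x ≤ ENNReal.ofReal ((Real.log (S.vol (S.nbhd E ε)).toReal
        - Real.log (S.vol (A n)).toReal) / ε) := by
    intro ε hε n hm0
    set N := S.vol (S.nbhd E ε) with hNdef
    set m := S.vol (A n) with hmdef
    have hNne : N ≠ ⊤ := hNfin ε hε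
    have hmne : m ≠ ⊤ := hAne n
    have hmleN : m ≤ N :=
      (measure_mono Set.inter_subset_left).trans (measure_mono (hE_nbhd ε hε.1))
    have hm'pos : 0 < m.toReal := ENNReal.toReal_pos hm0 hmne
    have hN'pos : 0 < N.toReal := lt_of_lt_of_le hm'pos (ENNReal.toReal_mono hNne hmleN)
    -- pointwise bound for large r
    have key : ∀ r : ℝ, max ε (S.d x x₀ + r₀) < r →
        Real.log (S.vol (S.ball x r)).toReal / r ≤
          (Real.log N.toReal - Real.log m.toReal) / ε * ((n : ℝ) / r + 1)
            + Real.log m.toReal / r := by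
      intro r hr
      have hrε : ε < r := lt_of_le_of_lt (le_max_left _ _) hr
      have hr1 : S.d x x₀ + r₀ ≤ r := le_of_lt (lt_of_le_of_lt (le_max_right _ _) hr)
      have hrpos : 0 < r := hε.1.trans hrε
      have hnr : 0 < (n : ℝ) + r := by positivity
      set t := ε / ((n : ℝ) + r) with ht
      have ht0 : 0 < t := div_pos hε.1 hnr
      have ht1 : t < 1 := (div_lt_one hnr).mpr (by
        have : (0:ℝ) ≤ (n:ℝ) := Nat.cast_nonneg n
        linarith)
      have hvpos : 0 < S.vol (S.ball x r) :=
        lt_of_lt_of_le (pos_iff_ne_zero.mpr h0) (measure_mono (hEball r hr1))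
      have hsub : S.Zt t (A n) (S.ball x r) ⊆ S.nbhd E ε := by
        rintro z ⟨x', hx', y, hy, hz1, -⟩
        refine ⟨x', hx'.1, ?_⟩
        have hdx'x : S.d x' x ≤ (n : ℝ) := hx'.2
        have hdxy : S.d x y < r := hy
        have hdx'y : S.d x' y < (n : ℝ) + r := by
          have := S.d_triangle x' x y
          linarith
        calc S.d x' z = t * S.d x' y := hz1
          _ < t * ((n : ℝ) + r) := mul_lt_mul_of_pos_left hdx'y ht0
          _ = ε := div_mul_cancel₀ _ hnr.ne'
      have hbmr := hbm (A n) (S.ball x r) (pos_iff_ne_zero.mpr hm0) hvpos t ⟨ht0, ht1⟩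
      have hmain : m ^ (1 - t) * S.vol (S.ball x r) ^ t ≤ N :=
        hbmr.trans (measure_mono hsub)
      have hvne : S.vol (S.ball x r) ≠ ⊤ := by
        intro htop
        rw [htop, ENNReal.top_rpow_of_pos ht0, ENNReal.mul_top (by
          rw [Ne, ENNReal.rpow_eq_zero_iff]
          rintro (⟨h, -⟩ | ⟨h, -⟩)
          · exact hm0 h
          · exact hmne h)] at hmain
        exact hNne (top_le_iff.mp hmain)
      set v' := (S.vol (S.ball x r)).toReal with hv'
      have hv'pos : 0 < v' := ENNReal.toReal_pos hvpos.ne' hvne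
      have hR : m.toReal ^ (1 - t) * v' ^ t ≤ N.toReal := by
        have h1 := ENNReal.toReal_mono hNne hmain
        rwa [ENNReal.toReal_mul, ← ENNReal.toReal_rpow, ← ENNReal.toReal_rpow] at h1
      have hlog : (1 - t) * Real.log m.toReal + t * Real.log v' ≤ Real.log N.toReal := by
        have h1 : Real.log (m.toReal ^ (1 - t) * v' ^ t) ≤ Real.log N.toReal :=
          Real.log_le_log (by positivity) hR
        rwa [Real.log_mul (by positivity) (by positivity),
          Real.log_rpow hm'pos, Real.log_rpow hv'pos] at h1
      have hv'le : Real.log v' ≤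
          (Real.log N.toReal - Real.log m.toReal) * (((n : ℝ) + r) / ε) + Real.log m.toReal := by
        have ha : Real.log v' ≤ (Real.log N.toReal - (1 - t) * Real.log m.toReal) / t :=
          (le_div_iff₀ ht0).mpr (by linarith)
        refine ha.trans (le_of_eq ?_)
        rw [ht]
        field_simp [hε.1.ne', hnr.ne']
        ring
      have hfinal : Real.log v' / r ≤
          ((Real.log N.toReal - Real.log m.toReal) * (((n : ℝ) + r) / ε) + Real.log m.toReal) / r := by
        gcongr
      refine hfinal.trans (le_of_eq ?_)
      field_simp [hε.1.ne', hrpos.ne']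
    -- liminf comparison
    have hg : Tendsto (fun r : ℝ =>
        (Real.log N.toReal - Real.log m.toReal) / ε * ((n : ℝ) / r + 1)
          + Real.log m.toReal / r) atTop
        (𝓝 ((Real.log N.toReal - Real.log m.toReal) / ε)) := by
      have h1 : Tendsto (fun r : ℝ => (n : ℝ) / r) atTop (𝓝 0) :=
        Tendsto.div_atTop tendsto_const_nhds tendsto_id
      have h2 : Tendsto (fun r : ℝ => Real.log m.toReal / r) atTop (𝓝 0) :=
        Tendsto.div_atTop tendsto_const_nhds tendsto_id
      have h3 : Tendsto (fun r : ℝ =>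
          (Real.log N.toReal - Real.log m.toReal) / ε * ((n : ℝ) / r + 1)
            + Real.log m.toReal / r) atTop
          (𝓝 ((Real.log N.toReal - Real.log m.toReal) / ε * (0 + 1) + 0)) :=
        (Filter.Tendsto.mul tendsto_const_nhds (h1.add tendsto_const_nhds)).add h2
      simpa using h3
    have hle : S.VE x ≤ liminf (fun r : ℝ => ENNReal.ofReal
        ((Real.log N.toReal - Real.log m.toReal) / ε * ((n : ℝ) / r + 1)
          + Real.log m.toReal / r)) atTop := by
      refine liminf_le_liminf ?_
      filter_upwards [eventually_gt_atTop (max ε (S.d x x₀ + r₀))] with r hr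
      exact ENNReal.ofReal_le_ofReal (key r hr)
    rwa [(ENNReal.tendsto_ofReal hg).liminf_eq] at hle
  -- VE x is finite
  have hAex : ∃ n, S.vol (A n) ≠ 0 := by
    by_contra h
    push_neg at h
    apply h0
    rw [← hAunion]
    exact le_antisymm ((measure_iUnion_le _).trans (by simp [h])) zero_le
  have hVEne : S.VE x ≠ ⊤ := by
    obtain ⟨n, hn⟩ := hAex
    exact ne_top_of_le_ne_top ENNReal.ofReal_ne_top (step1 ε₀ ⟨hε₀, le_refl _⟩ n hn)
  set hreal := (S.VE x).toReal with hhreal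
  have hreal0 : 0 ≤ hreal := ENNReal.toReal_nonneg
  -- key per-ε bound
  have key2 : ∀ ε ∈ Set.Ioc (0:ℝ) ε₀,
      ENNReal.ofReal (VE' * hreal - ε * (ε * hreal + 1)) ≤
        (S.vol (S.nbhd E ε) - S.vol E) / ENNReal.ofReal ε := by
    intro ε hε
    -- choose n
    have hb1 : VE' - min (ε ^ 2) (VE' / 2) < VE' := by
      have : 0 < min (ε ^ 2) (VE' / 2) := lt_min (pow_pos hε.1 2) (by linarith)
      linarith
    have htd : Tendsto (fun n => (S.vol (A n)).toReal) atTop (𝓝 VE') :=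
      (ENNReal.tendsto_toReal hT).comp hAtend
    obtain ⟨n, hn⟩ := (htd.eventually_const_lt hb1).exists
    have hm'1 : VE' - ε ^ 2 ≤ (S.vol (A n)).toReal := by
      have := min_le_left (ε ^ 2) (VE' / 2)
      linarith
    have hm'pos : 0 < (S.vol (A n)).toReal := by
      have := min_le_right (ε ^ 2) (VE' / 2)
      linarith
    have hm0 : S.vol (A n) ≠ 0 := by
      intro h
      rw [h] at hm'pos
      simp at hm'pos
    set N := S.vol (S.nbhd E ε) with hNdef
    set m' := (S.vol (A n)).toReal with hm'def
    have hNne : N ≠ ⊤ := hNfin ε hε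
    have hmleN : S.vol (A n) ≤ N :=
      (measure_mono Set.inter_subset_left).trans (measure_mono (hE_nbhd ε hε.1))
    have hN'pos : 0 < N.toReal :=
      lt_of_lt_of_le hm'pos (ENNReal.toReal_mono hNne hmleN)
    have hlogle : Real.log m' ≤ Real.log N.toReal :=
      Real.log_le_log hm'pos (ENNReal.toReal_mono hNne hmleN)
    have h1 := step1 ε hε n hm0
    have h2 : hreal ≤ (Real.log N.toReal - Real.log m') / ε :=
      ENNReal.toReal_le_of_le_ofReal (div_nonneg (by linarith) hε.1.le) h1
    have h3 : ε * hreal ≤ Real.log N.toReal - Real.log m' := by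
      have := (le_div_iff₀ hε.1).mp h2
      linarith
    have h4 : m' * Real.exp (ε * hreal) ≤ N.toReal := by
      have hl : Real.log (m' * Real.exp (ε * hreal)) ≤ Real.log N.toReal := by
        rw [Real.log_mul hm'pos.ne' (Real.exp_ne_zero _), Real.log_exp]
        linarith
      calc m' * Real.exp (ε * hreal)
          = Real.exp (Real.log (m' * Real.exp (ε * hreal))) :=
            (Real.exp_log (mul_pos hm'pos (Real.exp_pos _))).symm
        _ ≤ Real.exp (Real.log N.toReal) := Real.exp_le_exp.mpr hl
        _ = N.toReal := Real.exp_log hN'pos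
    -- real inequality
    have hineq : VE' * hreal - ε * (ε * hreal + 1) ≤ (m' * Real.exp (ε * hreal) - VE') / ε := by
      rw [le_div_iff₀ hε.1]
      have hexp : ε * hreal + 1 ≤ Real.exp (ε * hreal) := by
        linarith [Real.add_one_le_exp (ε * hreal)]
      have h5 : m' * (ε * hreal + 1) ≤ m' * Real.exp (ε * hreal) :=
        mul_le_mul_of_nonneg_left hexp hm'pos.le
      have h6 : (VE' - ε ^ 2) * (ε * hreal) ≤ m' * (ε * hreal) :=
        mul_le_mul_of_nonneg_right hm'1 (mul_nonneg hε.1.le hreal0)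
      nlinarith [h5, h6, hm'1]
    calc ENNReal.ofReal (VE' * hreal - ε * (ε * hreal + 1))
        ≤ ENNReal.ofReal ((m' * Real.exp (ε * hreal) - VE') / ε) :=
          ENNReal.ofReal_le_ofReal hineq
      _ = ENNReal.ofReal (m' * Real.exp (ε * hreal) - VE') / ENNReal.ofReal ε :=
          ENNReal.ofReal_div_of_pos hε.1
      _ = (ENNReal.ofReal (m' * Real.exp (ε * hreal)) - S.vol E) / ENNReal.ofReal ε := by
          simp only [hVE']
          rw [ENNReal.ofReal_sub _ ENNReal.toReal_nonneg, ENNReal.ofReal_toReal hT]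
      _ ≤ (N - S.vol E) / ENNReal.ofReal ε := by
          gcongr
          calc ENNReal.ofReal (m' * Real.exp (ε * hreal)) ≤ ENNReal.ofReal N.toReal :=
                ENNReal.ofReal_le_ofReal h4
            _ = N := ENNReal.ofReal_toReal hNne
  -- conclude
  have hlim : Tendsto (fun ε : ℝ => ENNReal.ofReal (VE' * hreal - ε * (ε * hreal + 1)))
      (nhdsWithin (0:ℝ) (Set.Ioi 0)) (𝓝 (ENNReal.ofReal (VE' * hreal))) := by
    apply tendsto_nhdsWithin_of_tendsto_nhds
    apply ENNReal.tendsto_ofReal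
    have hc : Continuous (fun ε : ℝ => VE' * hreal - ε * (ε * hreal + 1)) :=
      continuous_const.sub (continuous_id.mul ((continuous_id.mul continuous_const).add
        continuous_const))
    have := hc.tendsto 0
    simpa using this
  have hfin2 : ENNReal.ofReal (VE' * hreal) ≤ S.mink E := by
    rw [FMMS.mink, ← hlim.liminf_eq]
    refine liminf_le_liminf ?_
    filter_upwards [Ioc_mem_nhdsGT_of_mem (Set.mem_Ico.mpr ⟨le_refl (0:ℝ), hε₀⟩)] with ε hε
    exact key2 ε hε
  calc S.VE x * S.vol E = ENNReal.ofReal (VE' * hreal) := by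
        simp only [hVE', hhreal]
        rw [ENNReal.ofReal_mul ENNReal.toReal_nonneg, ENNReal.ofReal_toReal hT,
          ENNReal.ofReal_toReal hVEne, mul_comm]
    _ ≤ S.mink E := hfin2
end

section
/- Let v : (0,∞) → (0,∞) be a function such that for all 0 < r < R and δ > 0, log v(R) ≥ ((r+d+δ)/(R+d+δ))·log v(r) + ((R−r)/(R+d+δ))·log v(R+δ), where d = d(r) → 0 as r → 0⁺ (v plays the role of R ↦ 𝔪(B⁺_R(x₀))). Suppose additionally that for every R > 0 and every C with liminf_{δ→0⁺} (log v(R+δ) − log v(R))/δ ≥ C, one has C ≤ ((r+d+δ)/δ)·(log v(R) − log v(r))/(R−r) for some δ > 0. Then C ≤ lim_{R→∞} log v(R)/R whenever this limit exists. -/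
open MeasureTheory Filter Set Topology ENNReal

private lemma liminf_extract {g : ℝ → ℝ} {l : Filter ℝ} {C a : ℝ}
    (h : C ≤ Filter.liminf g l) (ha : 0 < a) (haC : a < C) :
    ∀ᶠ x in l, a ≤ g x := by
  rw [Filter.liminf_eq] at h
  set S := {b : ℝ | ∀ᶠ x in l, b ≤ g x} with hS
  rcases S.eq_empty_or_nonempty with hne | hne
  · rw [hne] at h; rw [Real.sSup_empty] at h; linarith
  · obtain ⟨b, hbS, hab⟩ := exists_lt_of_lt_csSup hne (lt_of_lt_of_le haC h)
    exact hbS.mono fun x hx => le_trans hab.le hx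

private lemma chain_lemma (f : ℝ → ℝ) (a : ℝ) (ha : 0 < a)
    (hmono : ∀ ⦃x y : ℝ⦄, 1 ≤ x → x ≤ y → f x ≤ f y)
    (hdini : ∀ T : ℝ, 1 ≤ T → ∀ᶠ δ in nhdsWithin (0:ℝ) (Set.Ioi 0),
      a ≤ (f (T + δ) - f T) / δ)
    (b : ℝ) (hb : 1 ≤ b) : f 1 + a * (b - 1) ≤ f b := by
  set A : Set ℝ := {x | x ∈ Set.Icc 1 b ∧ f 1 + a * (x - 1) ≤ f x} with hA
  have h1A : (1:ℝ) ∈ A := ⟨⟨le_refl 1, hb⟩, by simp⟩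
  have hAne : A.Nonempty := ⟨1, h1A⟩
  have hAbdd : BddAbove A := ⟨b, fun x hx => hx.1.2⟩
  set T := sSup A with hT
  have hT1 : 1 ≤ T := le_csSup hAbdd h1A
  have hTb : T ≤ b := csSup_le hAne fun x hx => hx.1.2
  have hTA : f 1 + a * (T - 1) ≤ f T := by
    by_contra hcon
    push_neg at hcon
    have hc : (f T - f 1) / a + 1 < T := by
      have h2 : (f T - f 1) / a < T - 1 := by rw [div_lt_iff₀ ha]; nlinarith
      linarith
    obtain ⟨y, hyA, hcy⟩ := exists_lt_of_lt_csSup hAne hc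
    have hyT : y ≤ T := le_csSup hAbdd hyA
    have h3 : f y ≤ f T := hmono hyA.1.1 hyT
    have h4 : f 1 + a * (y - 1) ≤ f T := le_trans hyA.2 h3
    have h5 : (f T - f 1) / a < y - 1 := by linarith
    rw [div_lt_iff₀ ha] at h5
    nlinarith
  rcases eq_or_lt_of_le hTb with heq | hTb'
  · rw [heq] at hTA; exact hTA
  · exfalso
    have hev := hdini T hT1
    have hev2 : ∀ᶠ δ in nhdsWithin (0:ℝ) (Set.Ioi 0), δ < b - T :=
      (eventually_lt_nhds (by linarith : (0:ℝ) < b - T)).filter_mono nhdsWithin_le_nhds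
    obtain ⟨δ, hδa, hδlt, hδpos⟩ :=
      (hev.and (hev2.and (eventually_mem_nhdsWithin))).exists
    have hδ0 : 0 < δ := hδpos
    have h6 : a * δ ≤ f (T + δ) - f T := by
      rw [le_div_iff₀ hδ0] at hδa; linarith
    have hmem : T + δ ∈ A := by
      refine ⟨⟨by linarith, by linarith⟩, ?_⟩
      have : f 1 + a * (T - 1) + a * δ ≤ f (T + δ) := by linarith
      calc f 1 + a * (T + δ - 1) = f 1 + a * (T - 1) + a * δ := by ring
        _ ≤ f (T + δ) := this
    have : T + δ ≤ T := le_csSup hAbdd hmem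
    linarith


/-- Abstract sharpness argument: if `log v` satisfies the
concavity-type inequality coming from Brunn–Minkowski applied to balls, and a
constant `C` is bounded above by all the liminfs
`liminf_{δ→0⁺}(log v(R+δ) - log v R)/δ`, then `C ≤ lim_{R→∞} log v(R)/R`. -/
theorem abstract_sharpness (v : ℝ → ℝ) (dfn : ℝ → ℝ) (C L : ℝ)
    (hv : ∀ R : ℝ, 0 < R → 0 < v R)
    (hd0 : ∀ r : ℝ, 0 < r → 0 ≤ dfn r)
    (hdlim : Filter.Tendsto dfn (nhdsWithin (0:ℝ) (Set.Ioi 0)) (nhds 0))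
    (hconc : ∀ r R δ : ℝ, 0 < r → r < R → 0 < δ →
      ((r + dfn r + δ) / (R + dfn r + δ)) * Real.log (v r)
        + ((R - r) / (R + dfn r + δ)) * Real.log (v (R + δ)) ≤ Real.log (v R))
    (hC : ∀ R : ℝ, 0 < R →
      C ≤ Filter.liminf (fun δ : ℝ => (Real.log (v (R + δ)) - Real.log (v R)) / δ)
        (nhdsWithin (0:ℝ) (Set.Ioi 0)))
    (hder : ∀ R : ℝ, 0 < R → ∀ r : ℝ, 0 < r → r < R → ∃ δ : ℝ, 0 < δ ∧
      C ≤ ((r + dfn r + δ) / δ) * ((Real.log (v R) - Real.log (v r)) / (R - r)))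
    (hlim : Filter.Tendsto (fun R : ℝ => Real.log (v R) / R) Filter.atTop (nhds L)) :
    C ≤ L := by
  by_contra hcon
  push_neg at hcon
  set f : ℝ → ℝ := fun R => Real.log (v R) with hf
  -- key inequality from concavity
  have hQ : ∀ r R δ : ℝ, 0 < r → r < R → 0 < δ →
      (f (R + δ) - f R) * (R - r) ≤ (r + dfn r + δ) * (f R - f r) := by
    intro r R δ hr hrR hδ
    have hd := hd0 r hr
    have h := hconc r R δ hr hrR hδ
    have hD : 0 < R + dfn r + δ := by linarith
    rw [div_mul_eq_mul_div, div_mul_eq_mul_div, ← add_div, div_le_iff₀ hD] at h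
    nlinarith [h]
  -- slope from 1 tends to L
  have hslope : Tendsto (fun R : ℝ => (f R - f 1) / (R - 1)) atTop (nhds L) := by
    have h2 : Tendsto (fun R : ℝ => R - 1) atTop atTop :=
      tendsto_atTop_add_const_right _ (-1) tendsto_id
    have h3 : Tendsto (fun R : ℝ => (R - 1)⁻¹) atTop (nhds 0) := h2.inv_tendsto_atTop
    have h4 : Tendsto (fun R : ℝ => f R / R * (1 + (R - 1)⁻¹) - f 1 * (R - 1)⁻¹)
        atTop (nhds (L * (1 + 0) - f 1 * 0)) :=
      (hlim.mul (tendsto_const_nhds.add h3)).sub (tendsto_const_nhds.mul h3)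
    have h5 : L * (1 + 0) - f 1 * 0 = L := by ring
    rw [h5] at h4
    refine h4.congr' ?_
    filter_upwards [eventually_gt_atTop (1:ℝ)] with R hR
    have hR0 : R ≠ 0 := by positivity
    have hR1 : R - 1 ≠ 0 := by intro h; apply absurd hR; simp; linarith
    field_simp
    ring
  rcases lt_or_ge L 0 with hL | hL
  · -- case L < 0
    have hevC : ∀ᶠ R in atTop, C ≤ (f R - f 1) / (R - 1) := by
      filter_upwards [hslope.eventually_lt_const hL, eventually_gt_atTop (1:ℝ)]
        with R hRneg hR1
      obtain ⟨δ, hδ, hCle⟩ := hder R (by linarith) 1 one_pos hR1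
      have hd1 : 0 ≤ dfn 1 := hd0 1 one_pos
      have hK : 1 ≤ (1 + dfn 1 + δ) / δ := by rw [le_div_iff₀ hδ]; linarith
      calc C ≤ (1 + dfn 1 + δ) / δ * ((f R - f 1) / (R - 1)) := hCle
        _ ≤ 1 * ((f R - f 1) / (R - 1)) := mul_le_mul_of_nonpos_right hK hRneg.le
        _ = (f R - f 1) / (R - 1) := one_mul _
    exact absurd (ge_of_tendsto hslope hevC) (not_le.mpr hcon)
  · -- case 0 ≤ L, so C > 0
    have hCpos : 0 < C := lt_of_le_of_lt hL hcon
    set a : ℝ := (L + C) / 2 with ha'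
    have haL : L < a := by simp only [ha']; linarith
    have haC : a < C := by simp only [ha']; linarith
    have ha : 0 < a := lt_of_le_of_lt hL haL
    have hmono : ∀ r R : ℝ, 0 < r → r < R → f r ≤ f R := by
      intro r R hr hrR
      by_contra hfr
      push_neg at hfr
      have hfreq := (liminf_extract (hC R (lt_trans hr hrR)) (half_pos hCpos)
        (half_lt_self hCpos)).and eventually_mem_nhdsWithin
      obtain ⟨δ, hδq, hδpos⟩ := hfreq.exists
      have hδ0 : (0:ℝ) < δ := hδpos
      have hq := hQ r R δ hr hrR hδ0
      have hd := hd0 r hr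
      have h7 : C / 2 * δ ≤ f (R + δ) - f R := by rw [le_div_iff₀ hδ0] at hδq; linarith
      nlinarith [mul_pos (half_pos hCpos) hδ0, mul_pos hr (sub_pos.mpr hfr)]
    have hdini : ∀ T : ℝ, 1 ≤ T → ∀ᶠ δ in nhdsWithin (0:ℝ) (Set.Ioi 0),
        a ≤ (f (T + δ) - f T) / δ :=
      fun T hT => liminf_extract (hC T (by linarith)) ha haC
    have hchain := chain_lemma f a ha
      (fun x y hx hxy => by
        rcases eq_or_lt_of_le hxy with rfl | hlt
        · exact le_refl _
        · exact hmono x y (by linarith) hlt)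
      hdini
    have haL' : a ≤ L := by
      refine ge_of_tendsto hslope ?_
      filter_upwards [eventually_gt_atTop (1:ℝ)] with b hb
      rw [le_div_iff₀ (by linarith : (0:ℝ) < b - 1)]
      have := hchain b hb.le
      linarith
    linarith
end

section
/- Let (M,F,𝔪) be a forward complete Finsler metric measure manifold with Ric_∞ ≥ 0. Then for all 0 < r < R, δ > 0, and x₀ ∈ M, with d = diam(B⁺_r(x₀)): log 𝔪(B⁺_{R+δ}(x₀)) − log 𝔪(B⁺_R(x₀)) ≤ ((r+d+δ)/(R−r))·(log 𝔪(B⁺_R(x₀)) − log 𝔪(B⁺_r(x₀))). -/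
open MeasureTheory Filter Set Topology ENNReal

/-- Log-concavity of the volume of forward balls under
`Ric_∞ ≥ 0`: for `0 < r < R`, `δ > 0` and `dE = diam B⁺_r(x₀)`,
`log 𝔪(B⁺_{R+δ}) - log 𝔪(B⁺_R) ≤ ((r+dE+δ)/(R-r)) (log 𝔪(B⁺_R) - log 𝔪(B⁺_r))`. -/
theorem log_vol_ball_concavity
    {M : Type*} [MeasurableSpace M] [TopologicalSpace M]
    (S : FMMS M) (hfc : S.ForwardComplete) (hbm : S.BrunnMinkowski)
    (x₀ : M) (r R δ : ℝ) (hr : 0 < r) (hrR : r < R) (hδ : 0 < δ)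
    (hpos : ∀ ρ : ℝ, 0 < ρ → 0 < S.vol (S.ball x₀ ρ))
    (hfin : ∀ ρ : ℝ, S.vol (S.ball x₀ ρ) ≠ ⊤)
    (dE : ℝ) (hdE0 : 0 ≤ dE)
    (hdE : ∀ x ∈ S.ball x₀ r, ∀ y ∈ S.ball x₀ r, S.d x y ≤ dE) :
    Real.log (S.vol (S.ball x₀ (R + δ))).toReal - Real.log (S.vol (S.ball x₀ R)).toReal
      ≤ ((r + dE + δ) / (R - r)) *
        (Real.log (S.vol (S.ball x₀ R)).toReal - Real.log (S.vol (S.ball x₀ r)).toReal) := by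
  set D : ℝ := (R - r) + (r + dE + δ) with hD
  have hu : (0:ℝ) < R - r := by linarith
  have hv : (0:ℝ) < r + dE + δ := by linarith
  have hDpos : 0 < D := by simp [hD]; linarith
  set t : ℝ := (R - r) / D with ht
  have htpos : 0 < t := div_pos hu hDpos
  have htlt : t < 1 := by
    rw [ht, div_lt_one hDpos]; linarith
  -- Z_t ⊂ ball R
  have hsub : S.Zt t (S.ball x₀ r) (S.ball x₀ (R + δ)) ⊆ S.ball x₀ R := by
    rintro z ⟨x, hx, y, hy, hxz, -⟩
    have hx0 : x₀ ∈ S.ball x₀ r := by simpa [FMMS.ball, S.d_self] using hr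
    have hxx0 : S.d x x₀ ≤ dE := hdE x hx x₀ hx0
    have hxy : S.d x y ≤ dE + (R + δ) := by
      have := S.d_triangle x x₀ y
      have hy' : S.d x₀ y < R + δ := hy
      linarith
    have hxy0 : 0 ≤ S.d x y := S.d_nonneg x y
    have h1 : S.d x₀ z ≤ S.d x₀ x + S.d x z := S.d_triangle x₀ x z
    have h2 : t * S.d x y ≤ t * (dE + (R + δ)) :=
      mul_le_mul_of_nonneg_left hxy htpos.le
    have h3 : t * (dE + (R + δ)) ≤ R - r := by
      rw [ht, div_mul_eq_mul_div, div_le_iff₀ hDpos, hD]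
      nlinarith
    have hx' : S.d x₀ x < r := hx
    have : S.d x₀ z < R := by rw [hxz] at h1; linarith
    exact this
  have hposr := hpos r hr
  have hposR := hpos R (by linarith)
  have hposRδ := hpos (R + δ) (by linarith)
  have hbm' := hbm (S.ball x₀ r) (S.ball x₀ (R + δ)) hposr hposRδ t ⟨htpos, htlt⟩
  have hle : S.vol (S.ball x₀ r) ^ (1 - t) * S.vol (S.ball x₀ (R + δ)) ^ t
      ≤ S.vol (S.ball x₀ R) :=
    hbm'.trans (measure_mono hsub)
  -- pass to reals
  set a : ℝ := (S.vol (S.ball x₀ r)).toReal with ha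
  set b : ℝ := (S.vol (S.ball x₀ R)).toReal with hb
  set c : ℝ := (S.vol (S.ball x₀ (R + δ))).toReal with hc
  have hapos : 0 < a := ENNReal.toReal_pos hposr.ne' (hfin r)
  have hbpos : 0 < b := ENNReal.toReal_pos hposR.ne' (hfin R)
  have hcpos : 0 < c := ENNReal.toReal_pos hposRδ.ne' (hfin (R + δ))
  have hreal : a ^ (1 - t) * c ^ t ≤ b := by
    have hne : S.vol (S.ball x₀ r) ^ (1 - t) * S.vol (S.ball x₀ (R + δ)) ^ t ≠ ⊤ :=
      ENNReal.mul_ne_top (ENNReal.rpow_ne_top_of_nonneg (by linarith) (hfin r))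
        (ENNReal.rpow_ne_top_of_nonneg htpos.le (hfin (R + δ)))
    have := ENNReal.toReal_mono (hfin R) hle
    rwa [ENNReal.toReal_mul, ← ENNReal.toReal_rpow, ← ENNReal.toReal_rpow] at this
  have hlog : (1 - t) * Real.log a + t * Real.log c ≤ Real.log b := by
    have h1 : Real.log (a ^ (1 - t) * c ^ t) ≤ Real.log b :=
      Real.log_le_log (by positivity) hreal
    rwa [Real.log_mul (by positivity) (by positivity), Real.log_rpow hapos,
      Real.log_rpow hcpos] at h1
  -- arithmetic
  set la := Real.log a
  set lb := Real.log b
  set lc := Real.log c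
  have hDt : D * t = R - r := by
    rw [ht, mul_div_cancel₀ _ hDpos.ne']
  have key : (r + dE + δ) * la + (R - r) * lc ≤ D * lb := by
    have h2 := mul_le_mul_of_nonneg_left hlog hDpos.le
    have h3 : D * ((1 - t) * la + t * lc) = (D - D * t) * la + (D * t) * lc := by ring
    rw [h3, hDt, hD] at h2
    rw [hD]
    linarith
  rw [div_mul_eq_mul_div, le_div_iff₀ hu]
  rw [hD] at key
  nlinarith [key]
end

section
/- Let (M,F,𝔪) be an n-dimensional Finsler metric measure manifold satisfying the Brunn–Minkowski inequality for Ric_∞ ≥ 0, and let E be a bounded Borel set with 0 < 𝔪(E) < ∞ and 𝔪⁺(E) < ∞. Then for every x₀ ∈ E and every R > 0, 𝔪⁺(E)/𝔪(E) ≥ (log 𝔪(B⁺_R(x₀)) − log 𝔪(E))/(d + R), where d = diam(E). -/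
open MeasureTheory Filter Set Topology ENNReal

/-- For a bounded Borel set `E` with `0 < 𝔪(E) < ∞`,
`𝔪⁺(E) < ∞`, `x₀ ∈ E` and `R > 0`, under the Brunn–Minkowski inequality,
`𝔪⁺(E)/𝔪(E) ≥ (log 𝔪(B⁺_R(x₀)) - log 𝔪(E)) / (dE + R)`. -/
theorem mink_ratio_lower_bound
    {M : Type*} [MeasurableSpace M] [TopologicalSpace M]
    (S : FMMS M) (hbm : S.BrunnMinkowski)
    (E : Set M) (hEb : S.Bounded E) (hEm : MeasurableSet E)
    (hEpos : 0 < S.vol E) (hEfin : S.vol E ≠ ⊤) (hmfin : S.mink E ≠ ⊤)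
    (dE : ℝ) (hdE0 : 0 ≤ dE) (hdE : ∀ x ∈ E, ∀ y ∈ E, S.d x y ≤ dE)
    (x₀ : M) (hx₀ : x₀ ∈ E) (R : ℝ) (hR : 0 < R)
    (hBpos : 0 < S.vol (S.ball x₀ R)) (hBfin : S.vol (S.ball x₀ R) ≠ ⊤) :
    ENNReal.ofReal
        ((Real.log (S.vol (S.ball x₀ R)).toReal - Real.log (S.vol E).toReal) / (dE + R))
      ≤ S.mink E / S.vol E := by

  set a := (S.vol E).toReal with ha
  set b := (S.vol (S.ball x₀ R)).toReal with hb
  have ha0 : 0 < a := ENNReal.toReal_pos hEpos.ne' hEfin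
  have hb0 : 0 < b := ENNReal.toReal_pos hBpos.ne' hBfin
  have hD : 0 < dE + R := by linarith
  rcases le_or_gt b a with hba | hab
  · have hlog : Real.log b - Real.log a ≤ 0 :=
      sub_nonpos.mpr (Real.log_le_log hb0 hba)
    rw [ENNReal.ofReal_eq_zero.mpr (div_nonpos_of_nonpos_of_nonneg hlog hD.le)]
    exact zero_le
  set L := Real.log b - Real.log a with hL
  have hL0 : 0 < L := sub_pos.mpr (Real.log_lt_log ha0 hab)
  set D := dE + R with hDdef
  have hvE : S.vol E = ENNReal.ofReal a := (ENNReal.ofReal_toReal hEfin).symm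
  have hvB : S.vol (S.ball x₀ R) = ENNReal.ofReal b := (ENNReal.ofReal_toReal hBfin).symm
  -- key pointwise bound
  have key : ∀ ε ∈ Set.Ioo (0:ℝ) D,
      ENNReal.ofReal (a * L / D) ≤ (S.vol (S.nbhd E ε) - S.vol E) / ENNReal.ofReal ε := by
    intro ε hε
    set t := ε / D with htdef
    have ht : t ∈ Set.Ioo (0:ℝ) 1 :=
      ⟨div_pos hε.1 hD, (div_lt_one hD).mpr hε.2⟩
    have htD : t * D = ε := div_mul_cancel₀ ε hD.ne'
    -- subset
    have hsub : S.Zt t E (S.ball x₀ R) ⊆ S.nbhd E ε := by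
      rintro z ⟨x, hx, y, hy, hxz, -⟩
      refine ⟨x, hx, ?_⟩
      have hxy : S.d x y < D := by
        have h1 := S.d_triangle x x₀ y
        have h2 := hdE x hx x₀ hx₀
        have h3 : S.d x₀ y < R := hy
        simp only [hDdef]; linarith
      rw [hxz, ← htD]
      exact mul_lt_mul_of_pos_left hxy ht.1
    have hbm' := hbm E (S.ball x₀ R) hEpos hBpos t ht
    have hpow : S.vol E ^ (1 - t) * S.vol (S.ball x₀ R) ^ t
        = ENNReal.ofReal (a ^ (1 - t) * b ^ t) := by
      rw [hvE, hvB, ENNReal.ofReal_mul (Real.rpow_nonneg ha0.le _),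
        ENNReal.ofReal_rpow_of_pos ha0, ENNReal.ofReal_rpow_of_pos hb0]
    have hexp : a ^ (1 - t) * b ^ t = a * Real.exp (t * L) := by
      rw [show (1 - t) = 1 + (-t) by ring, Real.rpow_add ha0, Real.rpow_one,
        Real.rpow_def_of_pos ha0, Real.rpow_def_of_pos hb0, mul_assoc,
        ← Real.exp_add]
      congr 1
      simp only [hL]
      ring
    have hreal : a + a * (t * L) ≤ a ^ (1 - t) * b ^ t := by
      rw [hexp]
      nlinarith [Real.add_one_le_exp (t * L), mul_le_mul_of_nonneg_left
        (Real.add_one_le_exp (t * L)) ha0.le]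
    have h3 : ENNReal.ofReal a + ENNReal.ofReal (a * (t * L)) ≤ S.vol (S.nbhd E ε) := by
      rw [← ENNReal.ofReal_add ha0.le (mul_nonneg ha0.le (mul_nonneg ht.1.le hL0.le))]
      calc ENNReal.ofReal (a + a * (t * L)) ≤ ENNReal.ofReal (a ^ (1 - t) * b ^ t) :=
            ENNReal.ofReal_le_ofReal hreal
        _ ≤ S.vol (S.Zt t E (S.ball x₀ R)) := hpow ▸ hbm'
        _ ≤ S.vol (S.nbhd E ε) := measure_mono hsub
    have h4 : ENNReal.ofReal (a * (t * L)) ≤ S.vol (S.nbhd E ε) - S.vol E := by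
      rw [hvE]; exact ENNReal.le_sub_of_add_le_left ENNReal.ofReal_ne_top h3
    have harith : a * (t * L) = ε * (a * L / D) := by
      simp only [htdef]; field_simp
    have h5 : ENNReal.ofReal ε * ENNReal.ofReal (a * L / D)
        ≤ S.vol (S.nbhd E ε) - S.vol E := by
      rw [← ENNReal.ofReal_mul hε.1.le, ← harith]; exact h4
    rw [ENNReal.le_div_iff_mul_le (Or.inl (by simpa using hε.1))
      (Or.inl ENNReal.ofReal_ne_top)]
    rw [mul_comm]; exact h5
  have hmink : ENNReal.ofReal (a * L / D) ≤ S.mink E := by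
    apply Filter.le_liminf_of_le
    · exact Filter.isCoboundedUnder_ge_of_le _ (fun _ => le_top)
    · filter_upwards [Ioo_mem_nhdsGT_of_mem (Set.left_mem_Ico.mpr hD)] with ε hε
      exact key ε hε
  rw [ENNReal.le_div_iff_mul_le (Or.inl hEpos.ne') (Or.inl hEfin)]
  calc ENNReal.ofReal (L / D) * S.vol E = ENNReal.ofReal (L / D * a) := by
        rw [hvE, ← ENNReal.ofReal_mul (by positivity)]
    _ = ENNReal.ofReal (a * L / D) := by ring_nf
    _ ≤ S.mink E := hmink
end
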